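/- Let ℓ and n be positive integers with 2ℓ < n. If B₀, B₁, ..., B_{ℓ−1} are ℓ pairwise intersecting, pairwise distinct cyclic intervals of length ℓ in Z_n, then there exists an element β ∈ Z_n contained in every Bᵢ; moreover the Bᵢ are exactly all ℓ cyclic intervals of length ℓ contained in a single cyclic interval A of length 2ℓ−1, and β can be taken as the middle element of A. -/
import Mathlib

/-- Cyclic distance in `ZMod n`: the smaller of the two distances along the cycle. -/
def cdist {n : ℕ} (u v : ZMod n) : ℕ := min (u - v).val (v - u).val

/-- The cyclic interval of length `k` with left end `i` in `ZMod n`. -/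
def cInt {n : ℕ} (i : ZMod n) (k : ℕ) : Finset (ZMod n) :=
  (Finset.range k).image (fun j : ℕ => (i + (j : ZMod n) : ZMod n))

/-- Distance between two cyclic intervals: minimum cyclic distance between elements. -/
noncomputable def iDist {n : ℕ} (I J : Finset (ZMod n)) : ℕ :=
  sInf {d | ∃ u ∈ I, ∃ v ∈ J, d = cdist u v}

lemma cast_inj_of_lt' {n a b : ℕ} [NeZero n] (ha : a < n) (hb : b < n)
    (h : (a : ZMod n) = b) : a = b := by
  have := congrArg ZMod.val h
  rwa [ZMod.val_cast_of_lt ha, ZMod.val_cast_of_lt hb] at this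

lemma key_points {n ℓ : ℕ} (hl : 0 < ℓ) (hn : 2 * ℓ < n)
    (S : Finset (ZMod n)) (hS : S.card = ℓ)
    (hrel : ∀ x ∈ S, ∀ y ∈ S, ∃ j < ℓ, y = x + (j : ZMod n) ∨ x = y + (j : ZMod n)) :
    ∃ a : ZMod n, S = (Finset.range ℓ).image (fun j : ℕ => a + (j : ZMod n)) := by
  haveI : NeZero n := ⟨by omega⟩
  -- no two elements of S differ by m with ℓ ≤ m, m + ℓ ≤ n
  have notfar : ∀ m : ℕ, ℓ ≤ m → m + ℓ ≤ n → ∀ x ∈ S, ∀ y ∈ S,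
      x = y + (m : ZMod n) → False := by
    intro m hm1 hm2 x hx y hy hxy
    obtain ⟨j, hj, hc⟩ := hrel y hy x hx
    rcases hc with h | h
    · rw [hxy] at h
      have h2 : (m : ZMod n) = (j : ZMod n) := add_left_cancel h
      have := cast_inj_of_lt' (by omega) (by omega) h2
      omega
    · rw [h] at hxy
      have h2 : ((j + m : ℕ) : ZMod n) = 0 := by
        push_cast
        have h3 : x + ((j:ZMod n) + (m:ZMod n)) = x + 0 := by
          rw [add_zero, ← add_assoc]; exact hxy.symm
        exact add_left_cancel h3
      have := (ZMod.natCast_eq_zero_iff _ _).mp h2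
      have := Nat.le_of_dvd (by omega) this
      omega
  -- the dichotomy: relative to any s ∈ S, for each e < ℓ, exactly one of s+e, s+e-ℓ is in S
  have dich : ∀ s ∈ S, ∀ e < ℓ, (s + (e : ZMod n) ∈ S) ∨ (s + (e : ZMod n) - (ℓ : ZMod n) ∈ S) := by
    intro s hs e he
    set idx : ZMod n → ℕ := fun x => (x - s + (ℓ : ZMod n)).val with hidx
    have step : ∀ x ∈ S, idx x < 2 * ℓ ∧ x = s + ((idx x : ℕ) : ZMod n) - (ℓ : ZMod n) := by
      intro x hx
      obtain ⟨j, hj, hc⟩ := hrel s hs x hx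
      rcases hc with h | h
      · have hv : idx x = j + ℓ := by
          rw [hidx]; simp only [h]
          have : s + (j : ZMod n) - s + (ℓ : ZMod n) = ((j + ℓ : ℕ) : ZMod n) := by
            push_cast; ring
          rw [this, ZMod.val_cast_of_lt (by omega)]
        refine ⟨by omega, ?_⟩
        rw [hv, h]; push_cast; ring
      · -- s = x + j, so x = s - j, idx x = ℓ - j
        have hxe : x = s - (j : ZMod n) := by rw [h]; ring
        have hv : idx x = ℓ - j := by
          rw [hidx]; simp only [hxe]
          have : s - (j : ZMod n) - s + (ℓ : ZMod n) = ((ℓ - j : ℕ) : ZMod n) := by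
            rw [Nat.cast_sub hj.le]; ring
          rw [this, ZMod.val_cast_of_lt (by omega)]
        refine ⟨by omega, ?_⟩
        rw [hv, hxe, Nat.cast_sub hj.le]; ring
    have hmod : ∀ u, u < 2 * ℓ → u % ℓ = u ∨ u % ℓ + ℓ = u := by
      intro u hu
      rcases Nat.lt_or_ge u ℓ with h | h
      · left; exact Nat.mod_eq_of_lt h
      · right
        rw [Nat.mod_eq_sub_mod h, Nat.mod_eq_of_lt (by omega)]
        omega
    have hinj : Set.InjOn (fun x => idx x % ℓ) S := by
      intro x hx y hy hxy
      obtain ⟨hx2, hxf⟩ := step x hx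
      obtain ⟨hy2, hyf⟩ := step y hy
      simp only at hxy
      have hmx := hmod _ hx2
      have hmy := hmod _ hy2
      rcases show idx x = idx y ∨ idx x = idx y + ℓ ∨ idx y = idx x + ℓ by omega with h | h | h
      · rw [hxf, hyf, h]
      · exfalso
        apply notfar ℓ le_rfl (by omega) x hx y hy
        rw [hxf, hyf, h]; push_cast; ring
      · exfalso
        apply notfar ℓ le_rfl (by omega) y hy x hx
        rw [hxf, hyf, h]; push_cast; ring
    have himg : S.image (fun x => idx x % ℓ) = Finset.range ℓ := by
      apply Finset.eq_of_subset_of_card_le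
      · intro t ht
        simp only [Finset.mem_image] at ht
        obtain ⟨x, hx, rfl⟩ := ht
        simp only [Finset.mem_range]
        exact Nat.mod_lt _ hl
      · rw [Finset.card_range, Finset.card_image_of_injOn hinj, hS]
    have he2 : e ∈ S.image (fun x => idx x % ℓ) := by
      rw [himg]; simpa using he
    simp only [Finset.mem_image] at he2
    obtain ⟨x, hx, hxe⟩ := he2
    obtain ⟨hx2, hxf⟩ := step x hx
    have hmx := hmod _ hx2
    rcases show idx x = e ∨ idx x = e + ℓ by omega with h | h
    · right; rw [← h, ← hxf]; exact hx
    · left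
      have : s + (e : ZMod n) = x := by rw [hxf, h]; push_cast; ring
      rw [this]; exact hx
  -- find a block start: s ∈ S with s - 1 ∉ S
  have ⟨s₀, hs₀⟩ : S.Nonempty := Finset.card_pos.mp (by omega)
  have hex : ∃ s ∈ S, s - 1 ∉ S := by
    by_contra hco
    push_neg at hco
    have hall : ∀ k : ℕ, s₀ - (k : ZMod n) ∈ S := by
      intro k
      induction k with
      | zero => simpa using hs₀
      | succ k ih =>
        have := hco _ ih
        have he : s₀ - (k : ZMod n) - 1 = s₀ - ((k + 1 : ℕ) : ZMod n) := by push_cast; ring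
        rwa [he] at this
    have hsub : (Finset.range n).image (fun k : ℕ => s₀ - (k : ZMod n)) ⊆ S := by
      intro x hx
      simp only [Finset.mem_image, Finset.mem_range] at hx
      obtain ⟨k, _, rfl⟩ := hx
      exact hall k
    have hcardim : ((Finset.range n).image (fun k : ℕ => s₀ - (k : ZMod n))).card = n := by
      rw [Finset.card_image_of_injOn, Finset.card_range]
      intro a ha b hb hab
      simp only [Finset.mem_coe, Finset.mem_range] at ha hb
      simp only at hab
      have h2 : (a : ZMod n) = (b : ZMod n) := by linear_combination -hab
      exact cast_inj_of_lt' ha hb h2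
    have := Finset.card_le_card hsub
    omega
  obtain ⟨s, hs, hs1⟩ := hex
  -- all of s, s+1, ..., s+ℓ-1 are in S
  have hmem : ∀ e < ℓ, s + (e : ZMod n) ∈ S := by
    intro e he
    rcases dich s hs e he with h | h
    · exact h
    · exfalso
      by_cases hc : e + 1 = ℓ
      · apply hs1
        have : s - 1 = s + (e : ZMod n) - (ℓ : ZMod n) := by
          have : (ℓ : ZMod n) = (e : ZMod n) + 1 := by
            rw [← hc]; push_cast; ring
          rw [this]; ring
        rwa [this]
      · obtain ⟨d, hd⟩ : ∃ d, ℓ = e + 1 + d := ⟨ℓ - 1 - e, by omega⟩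
        rcases dich _ h d (by omega) with h2 | h2
        · apply hs1
          have : s - 1 = s + (e : ZMod n) - (ℓ : ZMod n) + (d : ZMod n) := by
            rw [hd]; push_cast; ring
          rwa [this]
        · apply notfar (ℓ + 1) (by omega) (by omega) s hs _ h2
          rw [hd]; push_cast; ring
  refine ⟨s, ?_⟩
  have hsub : (Finset.range ℓ).image (fun j : ℕ => s + (j : ZMod n)) ⊆ S := by
    intro x hx
    simp only [Finset.mem_image, Finset.mem_range] at hx
    obtain ⟨j, hj, rfl⟩ := hx
    exact hmem j hj
  have hcardim : ((Finset.range ℓ).image (fun j : ℕ => s + (j : ZMod n))).card = ℓ := by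
    rw [Finset.card_image_of_injOn, Finset.card_range]
    intro a ha b hb hab
    simp only [Finset.mem_coe, Finset.mem_range] at ha hb
    simp only at hab
    exact cast_inj_of_lt' (by omega) (by omega) (add_left_cancel hab)
  exact (Finset.eq_of_subset_of_card_le hsub (by omega)).symm

lemma mem_cInt' {n : ℕ} {i x : ZMod n} {k : ℕ} :
    x ∈ cInt i k ↔ ∃ j < k, x = i + (j : ZMod n) := by
  simp [cInt, Finset.mem_image, eq_comm]

theorem stmt16 (ℓ n : ℕ) (hl : 0 < ℓ) (hn : 2 * ℓ < n)
    (Bs : Finset (Finset (ZMod n))) (hcard : Bs.card = ℓ)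
    (hint : ∀ B ∈ Bs, ∃ i, B = cInt i ℓ)
    (hpair : ∀ B ∈ Bs, ∀ B' ∈ Bs, (B ∩ B').Nonempty) :
    ∃ a : ZMod n, Bs = (Finset.range ℓ).image (fun j : ℕ => cInt (a + (j : ZMod n)) ℓ) ∧
      ∀ B ∈ Bs, (a + ((ℓ - 1 : ℕ) : ZMod n)) ∈ B := by
  classical
  haveI : NeZero n := ⟨by omega⟩
  set st : Finset (ZMod n) → ZMod n :=
    fun B => if h : ∃ i, B = cInt i ℓ then h.choose else 0 with hst
  have hstB : ∀ B ∈ Bs, B = cInt (st B) ℓ := by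
    intro B hB
    have h := hint B hB
    have : st B = h.choose := dif_pos h
    rw [this]
    exact h.choose_spec
  set S : Finset (ZMod n) := Bs.image st with hSdef
  have hstinj : Set.InjOn st Bs := by
    intro B hB B' hB' h
    rw [hstB B hB, hstB B' hB', h]
  have hScard : S.card = ℓ := by
    rw [hSdef, Finset.card_image_of_injOn hstinj, hcard]
  have hrel : ∀ x ∈ S, ∀ y ∈ S, ∃ j < ℓ, y = x + (j : ZMod n) ∨ x = y + (j : ZMod n) := by
    intro x hx y hy
    rw [hSdef, Finset.mem_image] at hx hy
    obtain ⟨B, hB, rfl⟩ := hx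
    obtain ⟨B', hB', rfl⟩ := hy
    obtain ⟨z, hz⟩ := hpair B hB B' hB'
    rw [Finset.mem_inter] at hz
    obtain ⟨hz1, hz2⟩ := hz
    rw [hstB B hB, mem_cInt'] at hz1
    rw [hstB B' hB', mem_cInt'] at hz2
    obtain ⟨u, hu, hzu⟩ := hz1
    obtain ⟨v, hv, hzv⟩ := hz2
    rcases Nat.le_total u v with h | h
    · refine ⟨v - u, by omega, Or.inr ?_⟩
      rw [Nat.cast_sub h]
      have h2 : st B + (u : ZMod n) = st B' + (v : ZMod n) := by rw [← hzu, ← hzv]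
      linear_combination h2
    · refine ⟨u - v, by omega, Or.inl ?_⟩
      rw [Nat.cast_sub h]
      have h2 : st B + (u : ZMod n) = st B' + (v : ZMod n) := by rw [← hzu, ← hzv]
      linear_combination -h2
  obtain ⟨a, ha⟩ := key_points hl hn S hScard hrel
  have hform : ∀ B ∈ Bs, ∃ j < ℓ, B = cInt (a + (j : ZMod n)) ℓ := by
    intro B hB
    have : st B ∈ S := by rw [hSdef]; exact Finset.mem_image_of_mem st hB
    rw [ha, Finset.mem_image] at this
    obtain ⟨j, hj, hjs⟩ := this
    rw [Finset.mem_range] at hj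
    exact ⟨j, hj, by rw [hstB B hB, ← hjs]⟩
  have hsub : Bs ⊆ (Finset.range ℓ).image (fun j : ℕ => cInt (a + (j : ZMod n)) ℓ) := by
    intro B hB
    obtain ⟨j, hj, rfl⟩ := hform B hB
    exact Finset.mem_image_of_mem _ (Finset.mem_range.mpr hj)
  refine ⟨a, Finset.eq_of_subset_of_card_le hsub ?_, ?_⟩
  · calc ((Finset.range ℓ).image (fun j : ℕ => cInt (a + (j : ZMod n)) ℓ)).card
        ≤ (Finset.range ℓ).card := Finset.card_image_le
      _ = ℓ := Finset.card_range ℓ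
      _ = Bs.card := hcard.symm
  · intro B hB
    obtain ⟨j, hj, rfl⟩ := hform B hB
    rw [mem_cInt']
    refine ⟨ℓ - 1 - j, by omega, ?_⟩
    obtain ⟨d, hd1, hd2⟩ : ∃ d, ℓ - 1 - j = d ∧ ℓ - 1 = j + d := ⟨ℓ - 1 - j, rfl, by omega⟩
    rw [hd1, hd2]
    push_cast
    ring
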